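/- Let γ be a gauge on a real vector space X. Then γ and the reverse gauge γ∨(x) = γ(−x) are equivalent if and only if there exists a norm ‖·‖ on X that is equivalent to γ (i.e., there exist constants c₀, c₁ > 0 with c₀·γ(x) ≤ ‖x‖ ≤ c₁·γ(x) for all x ∈ X). -/

import Mathlib

/-!
If `γ(-x) ≤ c γ(x)`, the symmetrization `x ↦ γ(x) + γ(-x)` is a norm squeezed between `γ` and
`(1 + c) γ`. Conversely, a norm `N` with `c₀ γ ≤ N ≤ c₁ γ` is symmetric, so
`c₀ γ(x) ≤ N(x) = N(-x) ≤ c₁ γ(-x)`, and likewise with `x` and `-x` exchanged.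
-/

/-- A gauge on a real vector space: nonnegative, vanishing exactly at `0`,
positively homogeneous, and subadditive. -/
def IsGauge {X : Type*} [AddCommGroup X] [Module ℝ X] (γ : X → ℝ) : Prop :=
  (∀ x, 0 ≤ γ x) ∧ (∀ x, γ x = 0 ↔ x = 0) ∧
    (∀ (l : ℝ) (x : X), 0 < l → γ (l • x) = l * γ x) ∧
    (∀ x y, γ (x + y) ≤ γ x + γ y)

section Symmetrization

variable {X : Type*}

def symmetrization [Neg X] (γ : X → ℝ) (x : X) : ℝ := γ x + γ (-x)

theorem symmetrization_neg [InvolutiveNeg X] (γ : X → ℝ) (x : X) :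
    symmetrization γ (-x) = symmetrization γ x := by
  simp only [symmetrization, neg_neg, add_comm]

theorem symmetrization_le_of_map_neg_le [Neg X] {γ : X → ℝ} {c : ℝ} {x : X}
    (h : γ (-x) ≤ c * γ x) : symmetrization γ x ≤ (1 + c) * γ x := by
  unfold symmetrization
  linarith

theorem div_mul_le_map_neg_of_symmetric_bounds [Neg X] {γ N : X → ℝ} (hN : ∀ x, N (-x) = N x)
    {c₀ c₁ : ℝ} (hc₀ : 0 < c₀) (hc₁ : 0 < c₁) (hc : ∀ x, c₀ * γ x ≤ N x ∧ N x ≤ c₁ * γ x)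
    (x : X) : c₀ / c₁ * γ x ≤ γ (-x) ∧ γ (-x) ≤ c₁ / c₀ * γ x := by
  obtain ⟨hx₀, hx₁⟩ := hc x
  obtain ⟨hnx₀, hnx₁⟩ := hc (-x)
  rw [hN] at hnx₀ hnx₁
  constructor
  · rw [div_mul_eq_mul_div, div_le_iff₀ hc₁]
    linarith
  · rw [div_mul_eq_mul_div, le_div_iff₀ hc₀]
    linarith

namespace IsGauge

variable [AddCommGroup X] [Module ℝ X] {γ : X → ℝ}

theorem map_zero (hγ : IsGauge γ) : γ 0 = 0 := (hγ.2.1 0).2 rfl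

theorem le_symmetrization (hγ : IsGauge γ) (x : X) : γ x ≤ symmetrization γ x :=
  le_add_of_nonneg_right (hγ.1 (-x))

theorem symmetrization_nonneg (hγ : IsGauge γ) (x : X) : 0 ≤ symmetrization γ x :=
  add_nonneg (hγ.1 x) (hγ.1 (-x))

theorem symmetrization_eq_zero_iff (hγ : IsGauge γ) (x : X) : symmetrization γ x = 0 ↔ x = 0 := by
  rw [symmetrization, add_eq_zero_iff_of_nonneg (hγ.1 x) (hγ.1 (-x)), hγ.2.1, hγ.2.1, neg_eq_zero,
    and_self]

theorem symmetrization_smul_of_nonneg (hγ : IsGauge γ) {l : ℝ} (hl : 0 ≤ l) (x : X) :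
    symmetrization γ (l • x) = l * symmetrization γ x := by
  rcases hl.eq_or_lt with rfl | hl
  · simp [symmetrization, hγ.map_zero]
  · rw [symmetrization, symmetrization, ← smul_neg, hγ.2.2.1 l x hl, hγ.2.2.1 l (-x) hl, mul_add]

theorem symmetrization_smul (hγ : IsGauge γ) (l : ℝ) (x : X) :
    symmetrization γ (l • x) = |l| * symmetrization γ x := by
  rcases le_total 0 l with hl | hl
  · rw [abs_of_nonneg hl, hγ.symmetrization_smul_of_nonneg hl]
  · rw [abs_of_nonpos hl, ← symmetrization_neg γ x, ← hγ.symmetrization_smul_of_nonneg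
      (neg_nonneg.2 hl), neg_smul, smul_neg, neg_neg]

theorem symmetrization_add_le (hγ : IsGauge γ) (x y : X) :
    symmetrization γ (x + y) ≤ symmetrization γ x + symmetrization γ y := by
  have h := hγ.2.2.2 x y
  have hneg := hγ.2.2.2 (-x) (-y)
  rw [← neg_add] at hneg
  unfold symmetrization
  linarith

end IsGauge

end Symmetrization

theorem stmt_5 {X : Type*} [AddCommGroup X] [Module ℝ X]
    (γ : X → ℝ) (hγ : IsGauge γ) :
    (∃ c₀ c₁ : ℝ, 0 < c₀ ∧ 0 < c₁ ∧
      ∀ x : X, c₀ * γ x ≤ γ (-x) ∧ γ (-x) ≤ c₁ * γ x) ↔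
    (∃ N : X → ℝ,
      (∀ x : X, 0 ≤ N x) ∧
      (∀ x : X, N x = 0 ↔ x = 0) ∧
      (∀ (l : ℝ) (x : X), N (l • x) = |l| * N x) ∧
      (∀ x y : X, N (x + y) ≤ N x + N y) ∧
      (∃ c₀ c₁ : ℝ, 0 < c₀ ∧ 0 < c₁ ∧
        ∀ x : X, c₀ * γ x ≤ N x ∧ N x ≤ c₁ * γ x)) := by
  constructor
  · rintro ⟨_, c₁, -, hc₁, hc⟩
    refine ⟨symmetrization γ, hγ.symmetrization_nonneg, hγ.symmetrization_eq_zero_iff,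
      hγ.symmetrization_smul, hγ.symmetrization_add_le, 1, 1 + c₁, one_pos, by linarith,
      fun x => ⟨?_, symmetrization_le_of_map_neg_le (hc x).2⟩⟩
    rw [one_mul]
    exact hγ.le_symmetrization x
  · rintro ⟨N, -, -, hN_smul, -, c₀, c₁, hc₀, hc₁, hc⟩
    have hN_neg : ∀ x, N (-x) = N x := fun x => by simpa using hN_smul (-1) x
    exact ⟨c₀ / c₁, c₁ / c₀, div_pos hc₀ hc₁, div_pos hc₁ hc₀,
      div_mul_le_map_neg_of_symmetric_bounds hN_neg hc₀ hc₁ hc⟩
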